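/- Let K be an algebraically closed field of characteristic 0 and let A be the 2n×2n block-diagonal matrix with n copies of the block [[0,1],[0,0]]. Then for every decomposition A = Σᵢ₌₁ᵏ (aᵢ uᵢ⊗vᵢ + bᵢ vᵢ⊗uᵢ) with uᵢ,vᵢ ∈ K^{2n}, we have k ≥ n; i.e., str(A) = rk(A) = n. -/

import Mathlib

/-!
Symmetrizing a decomposition `A = ∑ᵢ (aᵢ • uᵢ⊗vᵢ + bᵢ • vᵢ⊗uᵢ)` gives
`A + Aᵀ = ∑ᵢ (aᵢ + bᵢ) • (uᵢ⊗vᵢ + vᵢ⊗uᵢ)`, a sum of `2k` matrices of rank at most one. For the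
block matrix `A`, `A + Aᵀ` is the permutation matrix of the swap `2j ↔ 2j + 1`, of rank `2n`;
hence `n ≤ k`. The same bound gives `n ≤ rank A`, and `A * A = 0` gives `rank A ≤ n`.
-/

open Matrix

namespace Matrix

variable {K : Type*} [Field K] {m n : Type*} [Fintype n]

theorem rank_add_le (A B : Matrix m n K) : (A + B).rank ≤ A.rank + B.rank := by
  have hrange : LinearMap.range (A + B).mulVecLin ≤
      LinearMap.range A.mulVecLin ⊔ LinearMap.range B.mulVecLin := by
    rintro _ ⟨x, rfl⟩
    rw [mulVecLin_add]
    exact Submodule.add_mem_sup ⟨x, rfl⟩ ⟨x, rfl⟩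
  exact (Submodule.finrank_mono hrange).trans (Submodule.finrank_add_le_finrank_add_finrank _ _)

theorem rank_sum_le {ι : Type*} (s : Finset ι) (M : ι → Matrix m n K) :
    (∑ i ∈ s, M i).rank ≤ ∑ i ∈ s, (M i).rank := by
  classical
  induction s using Finset.induction_on with
  | empty => simp
  | insert j s hj ih =>
    rw [Finset.sum_insert hj, Finset.sum_insert hj]
    exact (rank_add_le _ _).trans (Nat.add_le_add_left ih _)

theorem rank_add_transpose_le (A : Matrix n n K) : (A + Aᵀ).rank ≤ 2 * A.rank :=
  (rank_add_le _ _).trans_eq (by rw [rank_transpose, two_mul])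

theorem rank_add_transpose_le_of_eq_sum {k : ℕ} {A : Matrix n n K} {a b : Fin k → K}
    {u v : Fin k → n → K}
    (hA : A = ∑ i, (a i • vecMulVec (u i) (v i) + b i • vecMulVec (v i) (u i))) :
    (A + Aᵀ).rank ≤ 2 * k := by
  have hsymm : A + Aᵀ =
      ∑ i, (vecMulVec ((a i + b i) • u i) (v i) + vecMulVec (v i) ((a i + b i) • u i)) := by
    rw [hA, transpose_sum, ← Finset.sum_add_distrib]
    refine Finset.sum_congr rfl fun i _ => ?_
    simp only [transpose_add, transpose_smul, transpose_vecMulVec, smul_vecMulVec,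
      vecMulVec_smul]
    module
  calc (A + Aᵀ).rank ≤ ∑ _i : Fin k, 2 := by
        rw [hsymm]
        refine (rank_sum_le _ _).trans (Finset.sum_le_sum fun i _ => ?_)
        exact (rank_add_le _ _).trans (add_le_add (rank_vecMulVec_le _ _) (rank_vecMulVec_le _ _))
    _ = 2 * k := by simp [mul_comm]

/-- `A * A = 0` puts the range of `A` inside its kernel, so rank–nullity bounds the rank. -/
theorem two_mul_rank_le_of_mul_self_eq_zero {A : Matrix n n K} (hA : A * A = 0) :
    2 * A.rank ≤ Fintype.card n := by
  have hle : LinearMap.range A.mulVecLin ≤ LinearMap.ker A.mulVecLin := by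
    rintro _ ⟨x, rfl⟩
    simp [mulVec_mulVec, hA]
  have hdim := LinearMap.finrank_range_add_finrank_ker A.mulVecLin
  rw [Module.finrank_fintype_fun_eq_card] at hdim
  have := Submodule.finrank_mono hle
  unfold rank
  omega

end Matrix

def pairSwap (n : ℕ) : Equiv.Perm (Fin (2 * n)) :=
  Function.Involutive.toPerm
    (fun i => ⟨if i.1 % 2 = 0 then i.1 + 1 else i.1 - 1, by split_ifs <;> omega⟩)
    (fun i => Fin.ext <| by dsimp only; split_ifs <;> omega)

theorem pairSwap_val {n : ℕ} (i : Fin (2 * n)) :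
    (pairSwap n i).1 = if i.1 % 2 = 0 then i.1 + 1 else i.1 - 1 := rfl

/-- The block-diagonal matrix with `n` copies of `[[0,1],[0,0]]`. -/
def nilpotentBlockDiag (K : Type*) [Zero K] [One K] (n : ℕ) :
    Matrix (Fin (2 * n)) (Fin (2 * n)) K :=
  of fun i j => if i.1 % 2 = 0 ∧ j.1 = i.1 + 1 then 1 else 0

section nilpotentBlockDiag

variable (K : Type*) [Field K] (n : ℕ)

theorem nilpotentBlockDiag_add_transpose :
    nilpotentBlockDiag K n + (nilpotentBlockDiag K n)ᵀ =
      (1 : Matrix _ _ K).submatrix (pairSwap n) id := by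
  ext i j
  simp only [nilpotentBlockDiag, Matrix.add_apply, transpose_apply, of_apply, submatrix_apply, id,
    one_apply, Fin.ext_iff, pairSwap_val]
  split_ifs <;> first | omega | simp

theorem nilpotentBlockDiag_mul_self : nilpotentBlockDiag K n * nilpotentBlockDiag K n = 0 := by
  ext i l
  simp only [nilpotentBlockDiag, mul_apply, of_apply, Matrix.zero_apply]
  refine Finset.sum_eq_zero fun j _ => ?_
  split_ifs <;> first | omega | simp

theorem rank_nilpotentBlockDiag_add_transpose :
    (nilpotentBlockDiag K n + (nilpotentBlockDiag K n)ᵀ).rank = 2 * n := by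
  rw [nilpotentBlockDiag_add_transpose]
  exact (rank_submatrix (1 : Matrix _ _ K) (pairSwap n) (Equiv.refl _)).trans
    (by rw [rank_one, Fintype.card_fin])

theorem rank_nilpotentBlockDiag : (nilpotentBlockDiag K n).rank = n := by
  have hlower := rank_add_transpose_le (nilpotentBlockDiag K n)
  have hupper := two_mul_rank_le_of_mul_self_eq_zero (nilpotentBlockDiag_mul_self K n)
  rw [rank_nilpotentBlockDiag_add_transpose] at hlower
  rw [Fintype.card_fin] at hupper
  omega

end nilpotentBlockDiag

theorem stmt3_general (K : Type*) [Field K]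
    (n : ℕ) (A : Matrix (Fin (2 * n)) (Fin (2 * n)) K)
    (hA : A = Matrix.of fun i j => if i.1 % 2 = 0 ∧ j.1 = i.1 + 1 then (1 : K) else 0) :
    (∀ (k : ℕ) (a b : Fin k → K) (u v : Fin k → (Fin (2 * n) → K)),
        A = ∑ i, (a i • vecMulVec (u i) (v i) + b i • vecMulVec (v i) (u i)) → n ≤ k) ∧
    A.rank = n := by
  change A = nilpotentBlockDiag K n at hA
  subst hA
  refine ⟨fun k a b u v hsum => ?_, rank_nilpotentBlockDiag K n⟩
  have := rank_add_transpose_le_of_eq_sum hsum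
  rw [rank_nilpotentBlockDiag_add_transpose] at this
  omega

/-- For the `2n × 2n` block-diagonal matrix with `n` copies of `[[0,1],[0,0]]`, every
decomposition into `k` summands of the form `a • u⊗v + b • v⊗u` has `k ≥ n`;
moreover `rank A = n`, so `str A = rank A = n`. -/
theorem stmt3 (K : Type*) [Field K] [IsAlgClosed K] [CharZero K]
    (n : ℕ) (A : Matrix (Fin (2 * n)) (Fin (2 * n)) K)
    (hA : A = Matrix.of fun i j => if i.1 % 2 = 0 ∧ j.1 = i.1 + 1 then (1 : K) else 0) :
    (∀ (k : ℕ) (a b : Fin k → K) (u v : Fin k → (Fin (2 * n) → K)),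
        A = ∑ i, (a i • vecMulVec (u i) (v i) + b i • vecMulVec (v i) (u i)) → n ≤ k) ∧
    A.rank = n :=
  stmt3_general K n A hA
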